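/- Let p be a prime and let N be a simple GF(p)-representable rank-3 matroid whose ground set is the union of three lines L1, L2, L3 passing through a common point. If N has no two-point line, then each of L1, L2, L3 contains exactly p+1 points. -/

import Mathlib

open Matroid Set

namespace SGK

variable {α : Type*}

/-- The rank of a set `X` in a matroid `M`, as a value in `ℕ∞`. -/
noncomputable def rk (M : Matroid α) (X : Set α) : ℕ∞ :=
  sSup {n : ℕ∞ | ∃ I, M.Indep I ∧ I ⊆ X ∧ I.encard = n}

/-- The rank of a matroid. -/
noncomputable def Rank (M : Matroid α) : ℕ∞ := rk M M.E

/-- A matroid is simple if it has no loops and no parallel pairs,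
equivalently every set of at most two ground elements is independent. -/
def Simple (M : Matroid α) : Prop := ∀ e ∈ M.E, ∀ f ∈ M.E, M.Indep {e, f}

/-- `M` is representable over the field `F`: there is a map from the ground set to a
finite-dimensional `F`-vector space whose linear independence structure matches `M`. -/
def IsRep (F : Type*) [Field F] (M : Matroid α) : Prop :=
  ∃ (n : ℕ) (v : α → (Fin n → F)),
    ∀ I ⊆ M.E, (M.Indep I ↔ LinearIndependent F (I.restrict v))

/-- The points (rank-1 flats) of `M` contained in the set `X`. -/
def points (M : Matroid α) (X : Set α) : Set (Set α) :=
  {P | M.IsFlat P ∧ P ⊆ X ∧ rk M P = 1}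

/-- A line of `M` is a rank-2 flat. -/
def IsLine (M : Matroid α) (L : Set α) : Prop := M.IsFlat L ∧ rk M L = 2

/-- A circuit is a minimal dependent set. -/
def Circuit (M : Matroid α) (C : Set α) : Prop := Minimal M.Dep C

/-- A coloop is an element contained in every base. -/
def Coloop (M : Matroid α) (e : α) : Prop := ∀ B, M.IsBase B → e ∈ B

/-- Contraction of the set `C`, defined by duality: `M ／ C = (M✶ ＼ C)✶`. -/
def con (M : Matroid α) (C : Set α) : Matroid α := (M✶ ↾ (M.E \ C))✶

/-- A matroid is connected if it is nonempty and cannot be written as the direct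
sum of two nonempty matroids. -/
def Connected (M : Matroid α) : Prop :=
  M.E.Nonempty ∧ ¬ ∃ A B : Set α, A ∪ B = M.E ∧ Disjoint A B ∧ A.Nonempty ∧ B.Nonempty ∧
    ∀ I ⊆ M.E, M.Indep (I ∩ A) → M.Indep (I ∩ B) → M.Indep I

/-- `M` is isomorphic to the affine geometry `AG(d, F)` (of rank `d + 1`): its ground
set is in bijection with the affine space `F^d` in a way matching affine independence. -/
def IsAG (F : Type*) [Field F] (d : ℕ) (M : Matroid α) : Prop :=
  ∃ v : α → (Fin d → F),
    (∀ I ⊆ M.E, (M.Indep I ↔ AffineIndependent F (I.restrict v))) ∧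
    Set.InjOn v M.E ∧
    (∀ w : Fin d → F, ∃ e ∈ M.E, v e = w)

/-- `M` is isomorphic to the projective geometry `PG(k-1, F)` (of rank `k`): its ground
set is in bijection with the set of one-dimensional subspaces of `F^k`, matching
linear independence. -/
def IsPG (F : Type*) [Field F] (k : ℕ) (M : Matroid α) : Prop :=
  ∃ v : α → (Fin k → F),
    (∀ I ⊆ M.E, (M.Indep I ↔ LinearIndependent F (I.restrict v))) ∧
    (∀ e ∈ M.E, v e ≠ 0) ∧
    (∀ e ∈ M.E, ∀ f ∈ M.E,
      Submodule.span F {v e} = Submodule.span F {v f} → e = f) ∧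
    (∀ w : Fin k → F, w ≠ 0 → ∃ e ∈ M.E, Submodule.span F {w} = Submodule.span F {v e})

end SGK

/-!
Represent `e` by `o` and choose vectors `a₁ + a₂ + a₃ = 0` such that `Lᵢ` is represented in the
plane `⟨o, aᵢ⟩`. Every point of `Lᵢ` other than `e` is then `⟨s • o + aᵢ⟩` for a unique slope
`s ∈ GF(p)`; let `Aᵢ` be the set of these slopes, so `|Aᵢ| = |Lᵢ| - 1 ≥ 2`. As no line has just
two points, the line through the points of slopes `s` on `Lᵢ` and `t` on `Lⱼ` has a third point.
It lies on `Lₖ`, so it is the intersection `⟨-(s + t) • o + aₖ⟩` with `⟨o, aₖ⟩`, and therefore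
`-(Aᵢ + Aⱼ) ⊆ Aₖ`. Two of these inclusions and the Cauchy–Davenport theorem force `|Aₖ| = p`.
-/

open Matroid Set Submodule

section LinearAlgebra

variable {F V : Type*} [Field F] [AddCommGroup V] [Module F V]

theorem mem_span_singleton_of_mem_span_singleton {x y : V} (hx : x ≠ 0)
    (h : x ∈ span F {y}) : y ∈ span F {x} := by
  obtain ⟨c, rfl⟩ := mem_span_singleton.mp h
  have hc : c ≠ 0 := by rintro rfl; exact hx (zero_smul F y)
  exact mem_span_singleton.mpr ⟨c⁻¹, inv_smul_smul₀ hc y⟩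

theorem mem_span_singleton_of_mem_span_pair {U : Submodule F V} {o c u : V} {r : F}
    (ho : o ∉ U) (hr : r • o + c ∈ U) (hu : u ∈ U) (huc : u ∈ span F {o, c}) :
    u ∈ span F {r • o + c} := by
  obtain ⟨α, β, rfl⟩ := mem_span_pair.mp huc
  have hα : α - β * r = 0 := by
    by_contra h
    refine ho ((U.smul_mem_iff h).mp ?_)
    convert U.sub_mem hu (U.smul_mem β hr) using 1
    module
  exact mem_span_singleton.mpr ⟨β, by rw [sub_eq_zero.mp hα]; module⟩

theorem exists_mem_span_smul_add {o a u : V} (hu : u ∈ span F {o, a}) (hu' : u ∉ span F {o}) :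
    ∃ s : F, u ∈ span F {s • o + a} := by
  obtain ⟨α, β, rfl⟩ := mem_span_pair.mp hu
  have hβ : β ≠ 0 := by
    rintro rfl
    exact hu' (by simpa using smul_mem _ α (mem_span_singleton_self o))
  exact ⟨β⁻¹ * α, mem_span_singleton.mpr ⟨β, by rw [smul_add, smul_smul, mul_inv_cancel_left₀ hβ]⟩⟩

theorem eq_of_mem_span_smul_add {o a u : V} {s t : F} (hoa : LinearIndependent F ![o, a])
    (hu : u ≠ 0) (hs : u ∈ span F {s • o + a}) (ht : u ∈ span F {t • o + a}) : s = t := by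
  obtain ⟨c, rfl⟩ := mem_span_singleton.mp hs
  obtain ⟨d, hd⟩ := mem_span_singleton.mp ht
  obtain ⟨h₀, h₁⟩ := LinearIndependent.pair_iff.mp hoa (d * t - c * s) (d - c)
    (by linear_combination (norm := module) hd)
  have hc : c ≠ 0 := by rintro rfl; exact hu (zero_smul F _)
  rw [sub_eq_zero.mp h₁, ← mul_sub, mul_eq_zero, sub_eq_zero] at h₀
  exact (h₀.resolve_left hc).symm

end LinearAlgebra

section CauchyDavenport

variable {p : ℕ} [Fact p.Prime]

open Finset in
theorem ZMod.min_le_card_of_neg_add_mem {A B C : Finset (ZMod p)} (hA : A.Nonempty)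
    (hB : B.Nonempty) (h : ∀ s ∈ A, ∀ t ∈ B, -(s + t) ∈ C) : min p (#A + #B - 1) ≤ #C := by
  refine (ZMod.cauchy_davenport Fact.out hA hB).trans (card_neg C ▸ card_le_card ?_)
  intro u hu
  obtain ⟨s, hs, t, ht, rfl⟩ := mem_add.mp hu
  exact mem_neg'.mpr (h s hs t ht)

theorem ZMod.encard_eq_of_neg_add_mem {A B C : Set (ZMod p)} (hA : 2 ≤ A.encard)
    (hB : B.Nonempty) (hAB : ∀ s ∈ A, ∀ t ∈ B, -(s + t) ∈ C)
    (hAC : ∀ s ∈ A, ∀ u ∈ C, -(s + u) ∈ B) : B.encard = p := by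
  lift A to Finset (ZMod p) using A.toFinite
  lift B to Finset (ZMod p) using B.toFinite
  lift C to Finset (ZMod p) using C.toFinite
  rw [encard_coe_eq_coe_finsetCard] at hA ⊢
  simp only [Finset.mem_coe, Finset.coe_nonempty] at hAB hAC hB
  have hA₂ : 2 ≤ A.card := by exact_mod_cast hA
  obtain ⟨s, hs⟩ := Finset.card_pos.mp (show 0 < A.card by omega)
  obtain ⟨t, ht⟩ := hB
  have h₁ := ZMod.min_le_card_of_neg_add_mem ⟨s, hs⟩ ⟨t, ht⟩ hAB
  have h₂ := ZMod.min_le_card_of_neg_add_mem ⟨s, hs⟩ ⟨_, hAB s hs t ht⟩ hAC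
  have hBp : B.card ≤ p := (Finset.card_le_univ B).trans_eq (ZMod.card p)
  -- if `#B < p`, then `#B ≥ #A + #C - 1 > #C ≥ #A + #B - 1 > #B`
  norm_cast
  omega

end CauchyDavenport

namespace SGK

variable {α : Type*} {M : Matroid α} {L L₁ L₂ L₃ X I : Set α} {e x y z : α}

def NoTwoPointLine (M : Matroid α) : Prop := ¬ ∃ L, IsLine M L ∧ (points M L).encard = 2

theorem rk_eq_eRk (M : Matroid α) (X : Set α) : rk M X = M.eRk X := by
  refine le_antisymm (sSup_le ?_) ?_
  · rintro n ⟨I, hI, hIX, rfl⟩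
    exact hI.encard_le_eRk_of_subset hIX
  · obtain ⟨I, hI⟩ := M.exists_isBasis' X
    exact hI.eRk_eq_encard ▸ le_sSup ⟨I, hI.indep, hI.subset, rfl⟩

theorem Simple.indep_singleton (hS : Simple M) (hx : x ∈ M.E) : M.Indep {x} := by
  simpa using hS x hx x hx

theorem Simple.closure_singleton (hS : Simple M) (hx : x ∈ M.E) : M.closure {x} = {x} := by
  refine subset_antisymm (fun y hy => ?_) (M.subset_closure _ (singleton_subset_iff.2 hx))
  by_contra hyx
  exact (((hS.indep_singleton hx).mem_closure_iff_of_notMem hyx).mp hy).not_indep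
    (hS y (M.closure_subset_ground _ hy) x hx)

theorem Simple.points_eq_image_singleton (hS : Simple M) (hX : X ⊆ M.E) :
    points M X = (fun x => {x}) '' X := by
  ext P
  constructor
  · rintro ⟨hP, hPX, hP1⟩
    obtain ⟨I, hIP, hI, hI1⟩ := le_eRk_iff.mp (rk_eq_eRk M P ▸ hP1.ge)
    obtain ⟨x, rfl⟩ := encard_eq_one.mp hI1
    have hxP : x ∈ P := singleton_subset_iff.mp hIP
    have hB := hI.isBasis_of_eRk_ge (toFinite _) hIP
      (by rw [← rk_eq_eRk, hP1, hI.eRk_eq_encard, hI1]) hP.subset_ground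
    refine ⟨x, hPX hxP, subset_antisymm (singleton_subset_iff.2 hxP) ?_⟩
    exact hB.subset_closure.trans (hS.closure_singleton (hP.subset_ground hxP)).subset
  · rintro ⟨x, hx, rfl⟩
    refine ⟨?_, singleton_subset_iff.2 hx, ?_⟩
    · exact (hS.closure_singleton (hX hx) ▸ isFlat_closure {x} : M.IsFlat {x})
    · rw [rk_eq_eRk, (hS.indep_singleton (hX hx)).eRk_eq_encard, encard_singleton]

theorem Simple.encard_points (hS : Simple M) (hX : X ⊆ M.E) : (points M X).encard = X.encard := by
  rw [hS.points_eq_image_singleton hX, singleton_injective.injOn.encard_image]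

theorem IsLine.subset_ground (hL : IsLine M L) : L ⊆ M.E := hL.1.subset_ground

theorem IsLine.two_le_encard (hL : IsLine M L) : 2 ≤ L.encard :=
  hL.2 ▸ rk_eq_eRk M L ▸ M.eRk_le_encard L

theorem IsLine.exists_ne (hL : IsLine M L) (e : α) : ∃ x ∈ L, x ≠ e :=
  exists_ne_of_one_lt_encard ((by norm_num : (1 : ℕ∞) < 2).trans_le hL.two_le_encard) e

theorem IsLine.closure_pair_eq (hS : Simple M) (hL : IsLine M L) (hx : x ∈ L) (hy : y ∈ L)
    (hxy : x ≠ y) : M.closure {x, y} = L := by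
  have hI := hS x (hL.subset_ground hx) y (hL.subset_ground hy)
  have hB := hI.isBasis_of_eRk_ge (toFinite _) (pair_subset hx hy)
    (by rw [← rk_eq_eRk, hL.2, hI.eRk_eq_encard, encard_pair hxy]) hL.subset_ground
  exact subset_antisymm (hL.1.closure ▸ M.closure_subset_closure hB.subset) hB.subset_closure

theorem isLine_closure_pair (hS : Simple M) (hx : x ∈ M.E) (hy : y ∈ M.E) (hxy : x ≠ y) :
    IsLine M (M.closure {x, y}) := by
  refine ⟨isFlat_closure _, ?_⟩
  rw [rk_eq_eRk, eRk_closure_eq, (hS x hx y hy).eRk_eq_encard, encard_pair hxy]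

theorem IsLine.two_lt_encard (hS : Simple M) (hno2 : NoTwoPointLine M) (hL : IsLine M L) :
    2 < L.encard := by
  refine hL.two_le_encard.lt_of_ne fun h => hno2 ⟨L, hL, ?_⟩
  rw [hS.encard_points hL.subset_ground, h]

theorem IsLine.two_le_encard_diff_singleton (hS : Simple M) (hno2 : NoTwoPointLine M)
    (hL : IsLine M L) (he : e ∈ L) : 2 ≤ (L \ {e}).encard := by
  rw [← ENat.lt_add_one_iff' (by norm_num), encard_sdiff_singleton_add_one he]
  exact hL.two_lt_encard hS hno2

theorem IsLine.eq_of_mem_closure_pair (hS : Simple M) (hL : IsLine M L) (hx : x ∈ L)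
    (hy : y ∈ M.E) (hyL : y ∉ L) (hz : z ∈ M.closure {x, y}) (hzL : z ∈ L) : z = x := by
  by_contra hzx
  have hxy : x ≠ y := by rintro rfl; exact hyL hx
  have hxyE := pair_subset (hL.subset_ground hx) hy
  have hℓ := isLine_closure_pair hS (hL.subset_ground hx) hy hxy
  apply hyL
  rw [← hL.closure_pair_eq hS hx hzL (Ne.symm hzx),
    hℓ.closure_pair_eq hS (M.subset_closure _ hxyE (mem_insert x _)) hz (Ne.symm hzx)]
  exact M.subset_closure _ hxyE (mem_insert_of_mem x rfl)

theorem notMem_closure_pair_of_inter_eq_singleton (hS : Simple M) (h₁ : IsLine M L₁)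
    (h₁₂ : L₁ ∩ L₂ = {e}) (hx : x ∈ L₁) (hxe : x ≠ e) (hy : y ∈ L₂) (hye : y ≠ e)
    (hyE : y ∈ M.E) : e ∉ M.closure {x, y} := by
  have he : e ∈ L₁ ∩ L₂ := h₁₂ ▸ mem_singleton e
  have hyL : y ∉ L₁ := fun h => hye (h₁₂ ▸ ⟨h, hy⟩ : y ∈ ({e} : Set α))
  exact fun hcl => hxe (h₁.eq_of_mem_closure_pair hS hx hyE hyL hcl he.1).symm

theorem exists_mem_closure_pair_notMem_union (hS : Simple M) (hno2 : NoTwoPointLine M)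
    (h₁ : IsLine M L₁) (h₂ : IsLine M L₂) (h₁₂ : L₁ ∩ L₂ = {e}) (hx : x ∈ L₁) (hxe : x ≠ e)
    (hy : y ∈ L₂) (hye : y ≠ e) : ∃ z ∈ M.closure {x, y}, z ∉ L₁ ∪ L₂ := by
  have hxL : x ∉ L₂ := fun h => hxe (h₁₂ ▸ ⟨hx, h⟩ : x ∈ ({e} : Set α))
  have hyL : y ∉ L₁ := fun h => hye (h₁₂ ▸ ⟨h, hy⟩ : y ∈ ({e} : Set α))
  have hxy : x ≠ y := by rintro rfl; exact hyL hx
  have hℓ := isLine_closure_pair hS (h₁.subset_ground hx) (h₂.subset_ground hy) hxy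
  obtain ⟨z, hz, hzxy⟩ := not_subset.mp fun h =>
    (hℓ.two_lt_encard hS hno2).not_ge ((encard_le_encard h).trans_eq (encard_pair hxy))
  refine ⟨z, hz, fun hz₁₂ => hzxy ?_⟩
  rcases hz₁₂ with hz₁ | hz₂
  · exact Or.inl (h₁.eq_of_mem_closure_pair hS hx (h₂.subset_ground hy) hyL hz hz₁)
  · rw [pair_comm] at hz
    exact Or.inr (h₂.eq_of_mem_closure_pair hS hy (h₁.subset_ground hx) hxL hz hz₂)

section Representation

variable {F V : Type*} [Field F] [AddCommGroup V] [Module F V] {v : α → V}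

variable (F) in
def Represents (M : Matroid α) (v : α → V) : Prop :=
  ∀ I ⊆ M.E, M.Indep I ↔ LinearIndepOn F v I

theorem Represents.mem_closure_iff (hv : Represents F M v) (hI : M.Indep I) (hx : x ∈ M.E) :
    x ∈ M.closure I ↔ v x ∈ span F (v '' I) := by
  rw [hI.mem_closure_iff', ((hv I hI.subset_ground).mp hI).mem_span_iff, and_iff_right hx,
    hv _ (insert_subset hx hI.subset_ground)]

theorem Represents.mem_closure_pair_iff (hv : Represents F M v) (hS : Simple M) (hx : x ∈ M.E)
    (hy : y ∈ M.E) (hz : z ∈ M.E) : z ∈ M.closure {x, y} ↔ v z ∈ span F {v x, v y} := by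
  rw [hv.mem_closure_iff (hS x hx y hy) hz, image_pair]

theorem Represents.ne_zero (hv : Represents F M v) (hS : Simple M) (hx : x ∈ M.E) : v x ≠ 0 :=
  ((hv _ (singleton_subset_iff.2 hx)).mp (hS.indep_singleton hx)).ne_zero rfl

theorem Represents.eq_of_mem_span_singleton (hv : Represents F M v) (hS : Simple M)
    (hx : x ∈ M.E) (hy : y ∈ M.E) (h : v x ∈ span F {v y}) : x = y := by
  have := (hv.mem_closure_iff (hS.indep_singleton hy) hx).mpr (by rwa [image_singleton])
  rwa [hS.closure_singleton hy] at this

theorem Represents.linearIndependent_pair_smul (hv : Represents F M v) (hS : Simple M)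
    (he : e ∈ M.E) (hx : x ∈ M.E) (hxe : x ≠ e) {c : F} (hc : c ≠ 0) :
    LinearIndependent F ![v e, c • v x] := by
  refine (LinearIndependent.pair_iff' (hv.ne_zero hS he)).mpr fun d hd => hxe ?_
  refine hv.eq_of_mem_span_singleton hS hx he (mem_span_singleton.mpr ⟨c⁻¹ * d, ?_⟩)
  rw [mul_smul, hd, inv_smul_smul₀ hc]

theorem Represents.mem_span_pair_smul (hv : Represents F M v) (hS : Simple M) (hL : IsLine M L)
    (he : e ∈ L) (hx : x ∈ L) (hxe : x ≠ e) {c : F} (hc : c ≠ 0) (hy : y ∈ L) :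
    v y ∈ span F {v e, c • v x} := by
  have hvx : v x ∈ span F {v e, c • v x} := by
    have := smul_mem (span F {v e, c • v x}) c⁻¹ (subset_span (mem_insert_of_mem _ rfl))
    rwa [inv_smul_smul₀ hc] at this
  have hyE := hL.subset_ground hy
  rw [← hL.closure_pair_eq hS he hx (Ne.symm hxe),
    hv.mem_closure_pair_iff hS (hL.subset_ground he) (hL.subset_ground hx) hyE] at hy
  exact span_le.mpr (insert_subset (subset_span (mem_insert _ _)) (singleton_subset_iff.2 hvx)) hy

theorem Represents.exists_frame (hv : Represents F M v) (hS : Simple M) (hno2 : NoTwoPointLine M)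
    (h₁ : IsLine M L₁) (h₂ : IsLine M L₂) (h₃ : IsLine M L₃) (h₁₂ : L₁ ∩ L₂ = {e})
    (he₃ : e ∈ L₃) (hcover : M.E ⊆ L₁ ∪ L₂ ∪ L₃) :
    ∃ a₁ a₂ a₃ : V, a₁ + a₂ + a₃ = 0 ∧
      (LinearIndependent F ![v e, a₁] ∧ ∀ x ∈ L₁, v x ∈ span F {v e, a₁}) ∧
      (∀ x ∈ L₂, v x ∈ span F {v e, a₂}) ∧
      (LinearIndependent F ![v e, a₃] ∧ ∀ x ∈ L₃, v x ∈ span F {v e, a₃}) := by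
  have he : e ∈ L₁ ∩ L₂ := h₁₂ ▸ mem_singleton e
  obtain ⟨x, hx, hxe⟩ := h₁.exists_ne e
  obtain ⟨y, hy, hye⟩ := h₂.exists_ne e
  obtain ⟨z, hz, hz₁₂⟩ := exists_mem_closure_pair_notMem_union hS hno2 h₁ h₂ h₁₂ hx hxe hy hye
  have heE := h₁.subset_ground he.1
  have hxE := h₁.subset_ground hx
  have hyE := h₂.subset_ground hy
  have hzE := M.closure_subset_ground _ hz
  obtain ⟨l, m, hlm⟩ := mem_span_pair.mp ((hv.mem_closure_pair_iff hS hxE hyE hzE).mp hz)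
  have hl : l ≠ 0 := by
    rintro rfl
    refine hz₁₂ (Or.inr (hv.eq_of_mem_span_singleton hS hzE hyE ?_ ▸ hy))
    exact mem_span_singleton.mpr ⟨m, by rw [← hlm, zero_smul, zero_add]⟩
  have hm : m ≠ 0 := by
    rintro rfl
    refine hz₁₂ (Or.inl (hv.eq_of_mem_span_singleton hS hzE hxE ?_ ▸ hx))
    exact mem_span_singleton.mpr ⟨l, by rw [← hlm, zero_smul, add_zero]⟩
  have hz₃ : z ∈ L₃ := (hcover hzE).resolve_left hz₁₂
  have hze : z ≠ e := fun h => hz₁₂ (Or.inl (h ▸ he.1))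
  have hc : (-1 : F) ≠ 0 := neg_ne_zero.mpr one_ne_zero
  refine ⟨l • v x, m • v y, (-1 : F) • v z, by rw [← hlm]; module,
    ⟨hv.linearIndependent_pair_smul hS heE hxE hxe hl,
      fun _ => hv.mem_span_pair_smul hS h₁ he.1 hx hxe hl⟩,
    fun _ => hv.mem_span_pair_smul hS h₂ he.2 hy hye hm,
    ⟨hv.linearIndependent_pair_smul hS heE hzE hze hc,
      fun _ => hv.mem_span_pair_smul hS h₃ he₃ hz₃ hze hc⟩⟩

variable (F) in
/-- The affine coordinates of the points of `X` in the chart `s ↦ ⟨s • o + a⟩` of the projective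
line spanned by `o` and `a`. -/
def slopes (v : α → V) (o a : V) (X : Set α) : Set F :=
  {s | ∃ x ∈ X, v x ∈ span F {s • o + a}}

theorem Represents.encard_slopes (hv : Represents F M v) (hS : Simple M) (hLE : L ⊆ M.E)
    (he : e ∈ M.E) {a : V} (hea : LinearIndependent F ![v e, a])
    (hLa : ∀ x ∈ L, v x ∈ span F {v e, a}) :
    (slopes F v (v e) a (L \ {e})).encard = (L \ {e}).encard := by
  have hslope : ∀ x ∈ L \ {e}, ∃ s : F, v x ∈ span F {s • v e + a} := fun x hx =>
    exists_mem_span_smul_add (hLa x hx.1) fun h =>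
      hx.2 (hv.eq_of_mem_span_singleton hS (hLE hx.1) he h)
  choose! f hf using hslope
  have hne : ∀ x ∈ L \ {e}, v x ≠ 0 := fun x hx => hv.ne_zero hS (hLE hx.1)
  have himage : slopes F v (v e) a (L \ {e}) = f '' (L \ {e}) := by
    ext s
    constructor
    · rintro ⟨x, hx, hs⟩
      exact ⟨x, hx, eq_of_mem_span_smul_add hea (hne x hx) (hf x hx) hs⟩
    · rintro ⟨x, hx, rfl⟩
      exact ⟨x, hx, hf x hx⟩
  rw [himage]
  refine InjOn.encard_image fun x hx y hy hxy => hv.eq_of_mem_span_singleton hS (hLE hx.1)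
    (hLE hy.1) (mem_span_singleton_trans (hf x hx) ?_)
  exact hxy ▸ mem_span_singleton_of_mem_span_singleton (hne y hy) (hf y hy)

theorem Represents.neg_add_mem_slopes (hv : Represents F M v) (hS : Simple M)
    (hno2 : NoTwoPointLine M) (h₁ : IsLine M L₁) (h₂ : IsLine M L₂) (h₁₂ : L₁ ∩ L₂ = {e})
    (hcover : M.E ⊆ L₁ ∪ L₂ ∪ L₃) {a b c : V} (habc : a + b + c = 0)
    (hL₃ : ∀ z ∈ L₃, v z ∈ span F {v e, c}) {s t : F}
    (hs : s ∈ slopes F v (v e) a (L₁ \ {e})) (ht : t ∈ slopes F v (v e) b (L₂ \ {e})) :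
    -(s + t) ∈ slopes F v (v e) c (L₃ \ {e}) := by
  obtain ⟨x, ⟨hx, hxe⟩, hvx⟩ := hs
  obtain ⟨y, ⟨hy, hye⟩, hvy⟩ := ht
  have he : e ∈ L₁ ∩ L₂ := h₁₂ ▸ mem_singleton e
  have hxE := h₁.subset_ground hx
  have hyE := h₂.subset_ground hy
  obtain ⟨z, hz, hz₁₂⟩ := exists_mem_closure_pair_notMem_union hS hno2 h₁ h₂ h₁₂ hx hxe hy hye
  have hzE := M.closure_subset_ground _ hz
  have hz₃ : z ∈ L₃ := (hcover hzE).resolve_left hz₁₂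
  refine ⟨z, ⟨hz₃, fun h => hz₁₂ (Or.inl (mem_singleton_iff.mp h ▸ he.1))⟩, ?_⟩
  have hsU : s • v e + a ∈ span F {v x, v y} :=
    span_mono (singleton_subset_iff.2 (mem_insert (v x) {v y}))
      (mem_span_singleton_of_mem_span_singleton (hv.ne_zero hS hxE) hvx)
  have htU : t • v e + b ∈ span F {v x, v y} :=
    span_mono (subset_insert _ _) (mem_span_singleton_of_mem_span_singleton (hv.ne_zero hS hyE) hvy)
  -- `⟨v z⟩` is the intersection of the lines `⟨v x, v y⟩` and `⟨v e, c⟩`.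
  refine mem_span_singleton_of_mem_span_pair ?_ ?_ ((hv.mem_closure_pair_iff hS hxE hyE hzE).mp hz)
    (hL₃ z hz₃)
  · rw [← hv.mem_closure_pair_iff hS hxE hyE (h₁.subset_ground he.1)]
    exact notMem_closure_pair_of_inter_eq_singleton hS h₁ h₁₂ hx hxe hy hye hyE
  · have hw : -(s + t) • v e + c = -(s • v e + a) - (t • v e + b) := by
      rw [← sub_eq_zero, ← habc]; module
    rw [hw]
    exact sub_mem (neg_mem hsU) htU

end Representation

theorem encard_points_eq_of_copunctual {p : ℕ} [Fact p.Prime] (hS : Simple M)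
    (hR : IsRep (ZMod p) M) (h₁ : IsLine M L₁) (h₂ : IsLine M L₂) (h₃ : IsLine M L₃)
    (h₁₂ : L₁ ∩ L₂ = {e}) (h₁₃ : L₁ ∩ L₃ = {e}) (hcover : M.E ⊆ L₁ ∪ L₂ ∪ L₃)
    (hno2 : NoTwoPointLine M) : (points M L₃).encard = ((p + 1 : ℕ) : ℕ∞) := by
  obtain ⟨n, v, hv⟩ := hR
  have hv : Represents (ZMod p) M v := hv
  have he : e ∈ L₁ ∩ L₃ := h₁₃ ▸ mem_singleton e
  have heE := h₁.subset_ground he.1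
  obtain ⟨a₁, a₂, a₃, hsum, ⟨ha₁, hL₁⟩, hL₂, ⟨ha₃, hL₃⟩⟩ :=
    hv.exists_frame hS hno2 h₁ h₂ h₃ h₁₂ he.2 hcover
  have hA₁ := hv.encard_slopes hS h₁.subset_ground heE ha₁ hL₁
  have hA₃ := hv.encard_slopes hS h₃.subset_ground heE ha₃ hL₃
  have hp : (slopes (ZMod p) v (v e) a₃ (L₃ \ {e})).encard = p :=
    ZMod.encard_eq_of_neg_add_mem (hA₁ ▸ h₁.two_le_encard_diff_singleton hS hno2 he.1)
      (encard_pos.mp (zero_lt_two.trans_le (hA₃ ▸ h₃.two_le_encard_diff_singleton hS hno2 he.2)))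
      (fun s hs t ht => hv.neg_add_mem_slopes hS hno2 h₁ h₃ h₁₃
        (hcover.trans (union_right_comm L₁ L₂ L₃).subset) (by rwa [add_right_comm]) hL₂ hs ht)
      (fun s hs u hu => hv.neg_add_mem_slopes hS hno2 h₁ h₂ h₁₂ hcover hsum hL₃ hs hu)
  rw [hS.encard_points h₃.subset_ground, ← encard_sdiff_singleton_add_one he.2, ← hA₃, hp,
    Nat.cast_add_one]

end SGK

theorem stmt_6_general {α : Type*} (p : ℕ) [Fact p.Prime] (M : Matroid α)
    (hS : SGK.Simple M) (hR : SGK.IsRep (ZMod p) M)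
    (L1 L2 L3 : Set α)
    (h1 : SGK.IsLine M L1) (h2 : SGK.IsLine M L2) (h3 : SGK.IsLine M L3)
    (e : α) (h12 : L1 ∩ L2 = {e}) (h13 : L1 ∩ L3 = {e}) (h23 : L2 ∩ L3 = {e})
    (hcover : L1 ∪ L2 ∪ L3 = M.E)
    (hno2 : ¬ ∃ L, SGK.IsLine M L ∧ (SGK.points M L).encard = 2) :
    (SGK.points M L1).encard = ((p + 1 : ℕ) : ℕ∞) ∧
    (SGK.points M L2).encard = ((p + 1 : ℕ) : ℕ∞) ∧
    (SGK.points M L3).encard = ((p + 1 : ℕ) : ℕ∞) := by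
  refine ⟨SGK.encard_points_eq_of_copunctual hS hR h2 h3 h1 h23 (inter_comm L1 L2 ▸ h12) ?_ hno2,
    SGK.encard_points_eq_of_copunctual hS hR h1 h3 h2 h13 h12 ?_ hno2,
    SGK.encard_points_eq_of_copunctual hS hR h1 h2 h3 h12 h13 hcover.superset hno2⟩
  · rw [← hcover, union_comm _ L1, union_assoc]
  · rw [← hcover, union_right_comm]

/-- For a prime `p`, if a simple rank-3 `GF(p)`-representable matroid is the union of three
copunctual lines and has no two-point line, then each line has exactly `p + 1` points. -/
theorem stmt_6 {α : Type*} (p : ℕ) [Fact p.Prime] (M : Matroid α)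
    (hS : SGK.Simple M) (hR : SGK.IsRep (ZMod p) M) (hr : SGK.Rank M = 3)
    (L1 L2 L3 : Set α)
    (h1 : SGK.IsLine M L1) (h2 : SGK.IsLine M L2) (h3 : SGK.IsLine M L3)
    (e : α) (h12 : L1 ∩ L2 = {e}) (h13 : L1 ∩ L3 = {e}) (h23 : L2 ∩ L3 = {e})
    (hcover : L1 ∪ L2 ∪ L3 = M.E)
    (hno2 : ¬ ∃ L, SGK.IsLine M L ∧ (SGK.points M L).encard = 2) :
    (SGK.points M L1).encard = ((p + 1 : ℕ) : ℕ∞) ∧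
    (SGK.points M L2).encard = ((p + 1 : ℕ) : ℕ∞) ∧
    (SGK.points M L3).encard = ((p + 1 : ℕ) : ℕ∞) :=
  stmt_6_general p M hS hR L1 L2 L3 h1 h2 h3 e h12 h13 h23 hcover hno2
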